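/- arXiv:1812.09896 — 2 statements merged into one kernel-verified Lean document; each statement's English description precedes it below -/
import Mathlib

section
/- Let φ : W → (ZMod 2) × (ZMod 2) be the group homomorphism with φ(s₁) = φ(s₃) = (1,0) and φ(s₂) = φ(s₄) = (0,1). Then the kernel of φ equals the subgroup of W generated by the two elements s₁s₃ and s₂s₄. -/
/-!
Each simple reflection inverts or centralizes `s₁s₃` and `s₂s₄`, so `N = ⟨s₁s₃, s₂s₄⟩` is normal.
Modulo `N` we have `s₃ ≡ s₁` and `s₄ ≡ s₂`, so `W ⧸ N` is generated by two commuting involutions and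
every `w ∈ W` is congruent to some `s₁ ^ m * s₂ ^ n`. Then `φ w = (m, n) mod 2`, so `w ∈ ker φ`
forces `m` and `n` to be even, i.e. `w ∈ N`.
-/

/-- The Coxeter matrix of the 4-cycle: off-diagonal entries are `2` for cyclically adjacent
indices and `0` (i.e. `∞`) for the two opposite pairs. -/
def C4 : CoxeterMatrix (Fin 4) where
  M := Matrix.of fun i j : Fin 4 ↦
    if i = j then 1
    else if (i.val + 1) % 4 = j.val ∨ (j.val + 1) % 4 = i.val then 2 else 0
  off_diagonal := by simp only [Matrix.of_apply]; decide

/-- `W`, the right-angled Coxeter group of the 4-cycle. -/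
abbrev W : Type := C4.Group

/-- The simple reflections `s₁, s₂, s₃, s₄` of `W`, indexed by `Fin 4`
(so `s 0 = s₁`, `s 1 = s₂`, `s 2 = s₃`, `s 3 = s₄`). -/
def s (i : Fin 4) : W := C4.simple i

theorem Subgroup.conj_mem_closure {G : Type*} [Group G] {S : Set G} {g : G}
    (hS : ∀ x ∈ S, g * x * g⁻¹ ∈ closure S) {x : G} (hx : x ∈ closure S) :
    g * x * g⁻¹ ∈ closure S := by
  induction hx using Subgroup.closure_induction with
  | mem y hy => exact hS y hy
  | one => simp
  | mul y z _ _ hy hz => simpa [mul_assoc] using mul_mem hy hz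
  | inv y _ hy => simpa [mul_assoc] using inv_mem hy

namespace CoxeterSystem

variable {B W : Type*} [Group W] {M : CoxeterMatrix B} (cs : CoxeterSystem M W)

theorem commute_simple_of_eq_two {i j : B} (h : M i j = 2) :
    Commute (cs.simple i) (cs.simple j) := by
  have hsq : (cs.simple i * cs.simple j) ^ 2 = 1 := h ▸ cs.simple_mul_simple_pow i j
  rw [sq, mul_eq_one_iff_eq_inv, mul_inv_rev, inv_simple, inv_simple] at hsq
  exact hsq

theorem normal_of_simple_mul_mul_simple_mem {N : Subgroup W}
    (h : ∀ i, ∀ n ∈ N, cs.simple i * n * cs.simple i ∈ N) : N.Normal where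
  conj_mem n hn g := by
    induction g using cs.simple_induction_left with
    | one => simpa
    | mul_simple_left w i hw =>
      simpa [mul_assoc, inv_simple] using h i _ hw

end CoxeterSystem

theorem s_inv (i : Fin 4) : (s i)⁻¹ = s i := C4.toCoxeterSystem.inv_simple i

theorem s_sq (i : Fin 4) : s i ^ 2 = 1 := C4.toCoxeterSystem.simple_sq i

theorem s_mul_s_cancel_left (i : Fin 4) (w : W) : s i * (s i * w) = w :=
  C4.toCoxeterSystem.simple_mul_simple_cancel_left i

theorem s_mul_s_cancel_right (w : W) (i : Fin 4) : w * s i * s i = w :=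
  C4.toCoxeterSystem.simple_mul_simple_cancel_right i

theorem commute_s_of_eq_two {i j : Fin 4} (h : C4 i j = 2) : Commute (s i) (s j) :=
  C4.toCoxeterSystem.commute_simple_of_eq_two h

def rotationSubgroup : Subgroup W := Subgroup.closure {s 0 * s 2, s 1 * s 3}

theorem s_mul_s_add_two_mem (j : Fin 4) : s j * s (j + 2) ∈ rotationSubgroup := by
  have h02 : s 0 * s 2 ∈ rotationSubgroup := Subgroup.subset_closure (by simp)
  have h13 : s 1 * s 3 ∈ rotationSubgroup := Subgroup.subset_closure (by simp)
  fin_cases j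
  · exact h02
  · exact h13
  · simpa [s_inv] using inv_mem h02
  · simpa [s_inv] using inv_mem h13

theorem s_add_two_mul_s_mem (j : Fin 4) : s (j + 2) * s j ∈ rotationSubgroup := by
  simpa [add_assoc] using s_mul_s_add_two_mem (j + 2)

-- In the 4-cycle, a vertex other than `j` and `j + 2` is adjacent to both of them, so conjugation
-- by `s i` either inverts or centralizes `s j * s (j + 2)`.
theorem s_mul_mul_s_mem (i j : Fin 4) :
    s i * (s j * s (j + 2)) * s i ∈ rotationSubgroup := by
  have hpos : i = j ∨ i = j + 2 ∨ (C4 i j = 2 ∧ C4 i (j + 2) = 2) := by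
    fin_cases i <;> fin_cases j <;> decide
  rcases hpos with rfl | rfl | ⟨hij, hij'⟩
  · rw [s_mul_s_cancel_left]
    exact s_add_two_mul_s_mem i
  · rw [← mul_assoc, s_mul_s_cancel_right]
    exact s_add_two_mul_s_mem j
  · rw [← mul_assoc, (commute_s_of_eq_two hij).eq, mul_assoc (s j),
      (commute_s_of_eq_two hij').eq, ← mul_assoc, s_mul_s_cancel_right]
    exact s_mul_s_add_two_mem j

instance rotationSubgroup_normal : rotationSubgroup.Normal :=
  C4.toCoxeterSystem.normal_of_simple_mul_mul_simple_mem fun i _ hn ↦ by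
    have hconj := Subgroup.conj_mem_closure (g := s i) (fun x hx ↦ by
      rw [s_inv]
      rcases hx with rfl | rfl
      · exact s_mul_mul_s_mem i 0
      · exact s_mul_mul_s_mem i 1) hn
    rwa [s_inv] at hconj

theorem mk_s_add_two (j : Fin 4) : (s (j + 2) : W ⧸ rotationSubgroup) = s j := by
  rw [QuotientGroup.eq, s_inv]
  exact s_add_two_mul_s_mem j

theorem exists_mk_eq_pow_mul_pow (w : W) :
    ∃ m n : ℕ, (w : W ⧸ rotationSubgroup) =
      (s 0 : W ⧸ rotationSubgroup) ^ m * (s 1 : W ⧸ rotationSubgroup) ^ n := by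
  induction w using C4.toCoxeterSystem.simple_induction_left with
  | one => exact ⟨0, 0, by simp⟩
  | mul_simple_left w i ih =>
    obtain ⟨m, n, hw⟩ := ih
    have hi : (s i : W ⧸ rotationSubgroup) = s 0 ∨ (s i : W ⧸ rotationSubgroup) = s 1 := by
      fin_cases i
      exacts [.inl rfl, .inr rfl, .inl (mk_s_add_two 0), .inr (mk_s_add_two 1)]
    show ∃ m n : ℕ, ((s i * w : W) : W ⧸ rotationSubgroup) = _
    have hcomm : Commute (s 0 : W ⧸ rotationSubgroup) (s 1) :=
      (commute_s_of_eq_two (by decide)).map (QuotientGroup.mk' rotationSubgroup)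
    rw [QuotientGroup.mk_mul, hw]
    rcases hi with hi | hi <;> rw [hi]
    · exact ⟨m + 1, n, by rw [pow_succ', mul_assoc]⟩
    · exact ⟨m, n + 1, by rw [pow_succ', ← mul_assoc, ← mul_assoc, (hcomm.pow_left m).eq]⟩

/-- If `φ : W → (ZMod 2) × (ZMod 2)` is the group homomorphism with `φ(s₁) = φ(s₃) = (1,0)`
and `φ(s₂) = φ(s₄) = (0,1)`, then `ker φ` is the subgroup of `W` generated by
`s₁s₃` and `s₂s₄`. -/
theorem stmt2 (φ : W →* Multiplicative (ZMod 2 × ZMod 2))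
    (h1 : φ (s 0) = Multiplicative.ofAdd (1, 0)) (h2 : φ (s 1) = Multiplicative.ofAdd (0, 1))
    (h3 : φ (s 2) = Multiplicative.ofAdd (1, 0)) (h4 : φ (s 3) = Multiplicative.ofAdd (0, 1)) :
    φ.ker = Subgroup.closure {s 0 * s 2, s 1 * s 3} := by
  have hle : rotationSubgroup ≤ φ.ker := by
    rw [rotationSubgroup, Subgroup.closure_le]
    rintro x (rfl | rfl) <;>
      simp only [SetLike.mem_coe, MonoidHom.mem_ker, map_mul, h1, h2, h3, h4] <;> decide
  refine le_antisymm (fun w hw ↦ ?_) hle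
  obtain ⟨m, n, hmn⟩ := exists_mk_eq_pow_mul_pow w
  have hφ : φ w = Multiplicative.ofAdd ((m : ZMod 2), (n : ZMod 2)) := by
    rw [← QuotientGroup.lift_mk _ hle, hmn, map_mul, map_pow, map_pow, QuotientGroup.lift_mk,
      QuotientGroup.lift_mk, h1, h2, ← ofAdd_nsmul, ← ofAdd_nsmul, ← ofAdd_add]
    congr 1
    ext <;> simp
  obtain ⟨⟨k, rfl⟩, ⟨l, rfl⟩⟩ : 2 ∣ m ∧ 2 ∣ n := by
    simpa [hφ, ZMod.natCast_eq_zero_iff] using hw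
  change w ∈ rotationSubgroup
  rw [← QuotientGroup.eq_one_iff, hmn]
  simp only [pow_mul, ← QuotientGroup.mk_pow, s_sq, one_pow, QuotientGroup.mk_one, mul_one]
end

section
/- Let e₁, e₂, e₃ denote the standard basis of (ZMod 2)³. There exists a (unique) group homomorphism φ : W → (ZMod 2)³ with φ(s₁) = e₁, φ(s₂) = e₂, φ(s₃) = e₃ and φ(s₄) = e₂; this φ is surjective, and its kernel is isomorphic to ℤ × ℤ. -/
/-- The standard basis vectors `e₁, e₂, e₃` of `(ZMod 2)³`. -/
def e1 : ZMod 2 × ZMod 2 × ZMod 2 := (1, 0, 0)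
def e2 : ZMod 2 × ZMod 2 × ZMod 2 := (0, 1, 0)
def e3 : ZMod 2 × ZMod 2 × ZMod 2 := (0, 0, 1)

/-
The generators s₁, s₃ commute with s₂, s₄, and these are the only relations between the two
pairs, so W ≅ D∞ × D∞ with s₁, s₃ generating the first infinite dihedral factor and s₂, s₄ the
second. Transported along this isomorphism, φ sends a rotation `r a` of the first factor to
a • (e₁ + e₃) and kills every rotation of the second factor, while an element with a reflection
in the second (first) factor has an image with nonzero e₂-coordinate (with e₁- and e₃-coordinates
of different parity). Hence the kernel is the lattice of rotations ⟨r 2⟩ × ⟨r 1⟩ ≅ ℤ × ℤ.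
-/

open DihedralGroup

theorem zpow_mul_eq_mul_zpow_neg {G : Type*} [Group G] {σ τ : G} (hσ : σ * σ = 1)
    (hτ : τ * τ = 1) (n : ℤ) : (σ * τ) ^ n * σ = σ * (σ * τ) ^ (-n) := by
  have hσ' : σ⁻¹ = σ := inv_eq_of_mul_eq_one_right hσ
  have hτ' : τ⁻¹ = τ := inv_eq_of_mul_eq_one_right hτ
  have hconj : σ * (σ * τ) * σ⁻¹ = (σ * τ)⁻¹ := by
    rw [mul_inv_rev, hσ', hτ', ← mul_assoc, hσ, one_mul]
  calc (σ * τ) ^ n * σ = σ * (σ * (σ * τ) ^ n * σ⁻¹) := by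
        rw [hσ', ← mul_assoc, ← mul_assoc, hσ, one_mul]
    _ = σ * (σ * τ) ^ (-n) := by rw [← conj_zpow, hconj, inv_zpow, zpow_neg]

theorem CoxeterSystem.commute_simple_of_eq_two_s5 {B W : Type*} [Group W] {M : CoxeterMatrix B}
    (cs : CoxeterSystem M W) {i j : B} (h : M i j = 2) : Commute (cs.simple i) (cs.simple j) := by
  have hrel := cs.simple_mul_simple_pow i j
  rwa [h, pow_two, mul_eq_one_iff_eq_inv, mul_inv_rev, cs.inv_simple, cs.inv_simple] at hrel

namespace DihedralGroup

variable {G : Type*} [Group G] {σ τ : G}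

def liftInfinite (hσ : σ * σ = 1) (hτ : τ * τ = 1) : DihedralGroup 0 →* G where
  toFun
    | r (a : ℤ) => (σ * τ) ^ a
    | sr (a : ℤ) => σ * (σ * τ) ^ a
  map_one' := zpow_zero _
  map_mul' := by
    have key := zpow_mul_eq_mul_zpow_neg hσ hτ
    rintro (⟨a : ℤ⟩ | ⟨a : ℤ⟩) (⟨b : ℤ⟩ | ⟨b : ℤ⟩)
    · exact zpow_add _ a b
    · exact (show σ * (σ * τ) ^ (b - a) = (σ * τ) ^ a * (σ * (σ * τ) ^ b) by
        rw [← mul_assoc, key, mul_assoc, ← zpow_add, neg_add_eq_sub])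
    · exact (show σ * (σ * τ) ^ (a + b) = σ * (σ * τ) ^ a * (σ * τ) ^ b by
        rw [zpow_add, mul_assoc])
    · exact (show (σ * τ) ^ (b - a) = σ * (σ * τ) ^ a * (σ * (σ * τ) ^ b) by
        rw [mul_assoc σ, ← mul_assoc _ σ, key, ← mul_assoc, ← mul_assoc, hσ, one_mul,
          ← zpow_add, neg_add_eq_sub])

theorem infinite_hom_ext {f g : DihedralGroup 0 →* G} (h₀ : f (sr 0) = g (sr 0))
    (h₁ : f (sr 1) = g (sr 1)) : f = g := by
  have hr (a : ℤ) : r (Int.cast a) = (sr 0 * sr 1 : DihedralGroup 0) ^ a := by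
    rw [sr_mul_sr, sub_zero, r_one_zpow]
  have hsr (a : ℤ) : sr (Int.cast a) = (sr 0 : DihedralGroup 0) * r (Int.cast a) := by
    rw [sr_mul_r, zero_add]
  ext x
  rcases x with a | a <;> obtain ⟨a, rfl⟩ := ZMod.intCast_surjective a
  · simp only [hr, map_zpow, map_mul, h₀, h₁]
  · simp only [hsr a, hr, map_zpow, map_mul, h₀, h₁]

variable (hσ : σ * σ = 1) (hτ : τ * τ = 1)

-- `ZMod 0` unfolds to `ℤ`, so `r a` with `a : ℤ` would also typecheck, but `simp` could not
@[simp] theorem liftInfinite_r (a : ℤ) :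
    liftInfinite hσ hτ (r (Int.cast a)) = (σ * τ) ^ a := rfl

@[simp] theorem liftInfinite_sr (a : ℤ) :
    liftInfinite hσ hτ (sr (Int.cast a)) = σ * (σ * τ) ^ a := rfl

theorem liftInfinite_sr_zero : liftInfinite hσ hτ (sr 0) = σ :=
  (congrArg (σ * ·) (zpow_zero (σ * τ))).trans (mul_one σ)

theorem liftInfinite_sr_one : liftInfinite hσ hτ (sr 1) = τ :=
  (congrArg (σ * ·) (zpow_one (σ * τ))).trans (by rw [← mul_assoc, hσ, one_mul])

theorem commute_liftInfinite {g : G} (hσg : Commute σ g) (hτg : Commute τ g)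
    (x : DihedralGroup 0) : Commute (liftInfinite hσ hτ x) g := by
  rcases x with a | a <;> obtain ⟨a, rfl⟩ := ZMod.intCast_surjective a
  · exact (hσg.mul_left hτg).zpow_left a
  · exact hσg.mul_left ((hσg.mul_left hτg).zpow_left a)

end DihedralGroup

local notation "D∞" => DihedralGroup 0

theorem s_mul_self (i : Fin 4) : s i * s i = 1 := C4.toCoxeterSystem.simple_mul_simple_self i

theorem commute_s (i j : Fin 4) (h : C4 i j = 2) : Commute (s i) (s j) :=
  C4.toCoxeterSystem.commute_simple_of_eq_two_s5 h

def dihedralProdSimple : Fin 4 → D∞ × D∞ := ![(sr 0, 1), (1, sr 0), (sr 1, 1), (1, sr 1)]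

noncomputable def toDihedralProd : W →* D∞ × D∞ :=
  C4.toCoxeterSystem.lift ⟨dihedralProdSimple, by
    intro i j; fin_cases i <;> fin_cases j <;> decide⟩

theorem toDihedralProd_s (i : Fin 4) : toDihedralProd (s i) = dihedralProdSimple i :=
  C4.toCoxeterSystem.lift_apply_simple _ i

noncomputable def ofDihedralProd : D∞ × D∞ →* W :=
  (liftInfinite (s_mul_self 0) (s_mul_self 2)).noncommCoprod
    (liftInfinite (s_mul_self 1) (s_mul_self 3)) fun x y ↦
    (commute_liftInfinite _ _
      (commute_liftInfinite _ _ (commute_s 0 1 rfl) (commute_s 2 1 rfl) x).symm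
      (commute_liftInfinite _ _ (commute_s 0 3 rfl) (commute_s 2 3 rfl) x).symm y).symm

theorem ofDihedralProd_comp_toDihedralProd :
    ofDihedralProd.comp toDihedralProd = MonoidHom.id W := by
  refine C4.toCoxeterSystem.ext_simple fun i ↦ ?_
  change ofDihedralProd (toDihedralProd (s i)) = s i
  rw [toDihedralProd_s]
  fin_cases i <;>
    simp [dihedralProdSimple, ofDihedralProd, liftInfinite_sr_zero, liftInfinite_sr_one]

theorem toDihedralProd_comp_ofDihedralProd :
    toDihedralProd.comp ofDihedralProd = MonoidHom.id (D∞ × D∞) := by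
  have hinl : toDihedralProd.comp (liftInfinite (s_mul_self 0) (s_mul_self 2)) =
      MonoidHom.inl D∞ D∞ := by
    apply infinite_hom_ext <;>
      simp [toDihedralProd_s, dihedralProdSimple, liftInfinite_sr_zero, liftInfinite_sr_one]
  have hinr : toDihedralProd.comp (liftInfinite (s_mul_self 1) (s_mul_self 3)) =
      MonoidHom.inr D∞ D∞ := by
    apply infinite_hom_ext <;>
      simp [toDihedralProd_s, dihedralProdSimple, liftInfinite_sr_zero, liftInfinite_sr_one]
  simp only [ofDihedralProd, MonoidHom.comp_noncommCoprod, hinl, hinr,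
    MonoidHom.noncommCoprod_inl_inr]

noncomputable def dihedralProdEquiv : D∞ × D∞ ≃* W :=
  ofDihedralProd.toMulEquiv toDihedralProd toDihedralProd_comp_ofDihedralProd
    ofDihedralProd_comp_toDihedralProd

abbrev F2Cube : Type := Multiplicative (ZMod 2 × ZMod 2 × ZMod 2)

-- the characteristic map `λ_F` of the 4-belt
def characteristic : Fin 4 → ZMod 2 × ZMod 2 × ZMod 2 := ![e1, e2, e3, e2]

theorem F2Cube.mul_self (v : F2Cube) : v * v = 1 := by
  revert v; decide

def characteristicDihedralProd : D∞ × D∞ →* F2Cube :=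
  (liftInfinite (F2Cube.mul_self (.ofAdd e1)) (F2Cube.mul_self (.ofAdd e3))).coprod
    (liftInfinite (F2Cube.mul_self (.ofAdd e2)) (F2Cube.mul_self (.ofAdd e2)))

def rotationLattice : Multiplicative (ℤ × ℤ) →* D∞ × D∞ where
  toFun p := (r 2 ^ p.toAdd.1, r 1 ^ p.toAdd.2)
  map_one' := by simp
  map_mul' p q := by simp [zpow_add]

theorem rotationLattice_injective : Function.Injective rotationLattice := by
  intro p q h
  simp only [rotationLattice, r_zpow, one_mul, MonoidHom.coe_mk, OneHom.coe_mk, Prod.mk.injEq,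
    r.injEq, mul_eq_mul_left_iff, Int.cast_inj, OfNat.ofNat_ne_zero, or_false] at h
  exact Multiplicative.toAdd.injective (Prod.ext h.1 h.2)

theorem ker_characteristicDihedralProd :
    characteristicDihedralProd.ker = rotationLattice.range := by
  refine le_antisymm (fun d hd ↦ ?_) ?_
  · obtain ⟨x, y⟩ := d
    rcases x with a | a <;> obtain ⟨a, rfl⟩ := ZMod.intCast_surjective a <;>
    rcases y with b | b <;> obtain ⟨b, rfl⟩ := ZMod.intCast_surjective b <;>
    simp only [characteristicDihedralProd, e1, e2, e3, MonoidHom.mem_ker, MonoidHom.coprod_apply,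
      liftInfinite_r, liftInfinite_sr, ← ofAdd_add, ← ofAdd_zsmul, Prod.mk_add_mk, Prod.smul_mk,
      zsmul_eq_mul, CharTwo.add_self_eq_zero, add_zero, zero_add, mul_one, smul_zero, ofAdd_eq_one,
      Prod.mk_eq_zero, one_ne_zero, true_and, false_and, and_false, and_self] at hd
    · obtain ⟨c, rfl⟩ := (ZMod.intCast_zmod_eq_zero_iff_dvd a 2).1 hd
      exact ⟨Multiplicative.ofAdd (c, b), by simp [rotationLattice, r_zpow]⟩
    · obtain ⟨hsum, ha⟩ := hd
      simp [ha] at hsum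
  · rintro _ ⟨p, rfl⟩
    have h₁ : characteristicDihedralProd (r 2, 1) = 1 := by decide
    have h₂ : characteristicDihedralProd (1, r 1) = 1 := by decide
    have hsplit : rotationLattice p = (r 2, 1) ^ p.toAdd.1 * (1, r 1) ^ p.toAdd.2 := by
      simp [rotationLattice]
    rw [MonoidHom.mem_ker, hsplit, map_mul, map_zpow, map_zpow, h₁, h₂, one_zpow, one_zpow,
      one_mul]

section

variable {φ : W →* F2Cube} (hφ : ∀ i, φ (s i) = Multiplicative.ofAdd (characteristic i))
include hφ

theorem comp_dihedralProdEquiv :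
    φ.comp (dihedralProdEquiv : D∞ × D∞ →* W) = characteristicDihedralProd := by
  have h₁ : φ.comp (liftInfinite (s_mul_self 0) (s_mul_self 2)) =
      liftInfinite (F2Cube.mul_self (.ofAdd e1)) (F2Cube.mul_self (.ofAdd e3)) := by
    apply infinite_hom_ext <;> simp [liftInfinite_sr_zero, liftInfinite_sr_one, hφ, characteristic]
  have h₂ : φ.comp (liftInfinite (s_mul_self 1) (s_mul_self 3)) =
      liftInfinite (F2Cube.mul_self (.ofAdd e2)) (F2Cube.mul_self (.ofAdd e2)) := by
    apply infinite_hom_ext <;> simp [liftInfinite_sr_zero, liftInfinite_sr_one, hφ, characteristic]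
  change φ.comp ofDihedralProd = _
  simp only [ofDihedralProd, MonoidHom.comp_noncommCoprod, h₁, h₂]
  rfl

theorem surjective_of_map_s : Function.Surjective φ := by
  intro m
  refine ⟨s 0 ^ m.toAdd.1.val * s 1 ^ m.toAdd.2.1.val * s 2 ^ m.toAdd.2.2.val, ?_⟩
  simp only [map_mul, map_pow, hφ]
  revert m
  decide

noncomputable def kerMulEquiv : φ.ker ≃* Multiplicative (ℤ × ℤ) :=
  (dihedralProdEquiv.symm.subgroupMap φ.ker).trans <|
    (MulEquiv.subgroupCongr (by
      rw [← MonoidHom.ker_comp_mulEquiv, comp_dihedralProdEquiv hφ,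
        ker_characteristicDihedralProd])).trans
    (MonoidHom.ofInjective rotationLattice_injective).symm

end

noncomputable def characteristicHom : W →* F2Cube :=
  C4.toCoxeterSystem.lift ⟨fun i ↦ Multiplicative.ofAdd (characteristic i), by
    intro i j; fin_cases i <;> fin_cases j <;> decide⟩

theorem characteristicHom_s (i : Fin 4) :
    characteristicHom (s i) = Multiplicative.ofAdd (characteristic i) :=
  C4.toCoxeterSystem.lift_apply_simple _ i

theorem map_s_eq_characteristic_iff (φ : W →* F2Cube) :
    (∀ i, φ (s i) = Multiplicative.ofAdd (characteristic i)) ↔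
      φ (s 0) = Multiplicative.ofAdd e1 ∧ φ (s 1) = Multiplicative.ofAdd e2 ∧
      φ (s 2) = Multiplicative.ofAdd e3 ∧ φ (s 3) = Multiplicative.ofAdd e2 :=
  ⟨fun h ↦ ⟨h 0, h 1, h 2, h 3⟩, fun ⟨h₀, h₁, h₂, h₃⟩ i ↦ by fin_cases i <;> assumption⟩

/-- There is a unique group homomorphism `φ : W → (ZMod 2)³` with `φ(s₁) = e₁`,
`φ(s₂) = e₂`, `φ(s₃) = e₃`, `φ(s₄) = e₂`; it is surjective and its kernel is
isomorphic to `ℤ × ℤ`. -/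
theorem stmt5 :
    (∃! φ : W →* Multiplicative (ZMod 2 × ZMod 2 × ZMod 2),
      φ (s 0) = Multiplicative.ofAdd e1 ∧ φ (s 1) = Multiplicative.ofAdd e2 ∧
      φ (s 2) = Multiplicative.ofAdd e3 ∧ φ (s 3) = Multiplicative.ofAdd e2) ∧
    ∀ φ : W →* Multiplicative (ZMod 2 × ZMod 2 × ZMod 2),
      (φ (s 0) = Multiplicative.ofAdd e1 ∧ φ (s 1) = Multiplicative.ofAdd e2 ∧
       φ (s 2) = Multiplicative.ofAdd e3 ∧ φ (s 3) = Multiplicative.ofAdd e2) →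
      Function.Surjective φ ∧ Nonempty (φ.ker ≃* Multiplicative (ℤ × ℤ)) := by
  simp only [← map_s_eq_characteristic_iff]
  refine ⟨⟨characteristicHom, characteristicHom_s, fun φ hφ ↦ ?_⟩, fun φ hφ ↦
    ⟨surjective_of_map_s hφ, ⟨kerMulEquiv hφ⟩⟩⟩
  exact C4.toCoxeterSystem.ext_simple fun i ↦ (hφ i).trans (characteristicHom_s i).symm
end
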